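/- Let ∃X⃗∀Y⃗φ be a closed quantified Boolean formula. Construct the binary causal model M with exogenous variable U, endogenous variables {X⁰, X¹ : X ∈ X⃗} ∪ {Y : Y ∈ Y⃗} ∪ {A} (A fresh), where every endogenous variable V has the structural equation V = U; let u = 0 be the context assigning 0 to U; and let ψ = ψ₁ ∨ (ψ₂ ∧ ψ₃), where ψ₁ = ¬(⋀_{X∈X⃗}(X⁰ ≠ X¹)), ψ₂ = ¬(A = 1 ∧ Y⃗ = 1⃗), and ψ₃ = (A = 1) ∨ φ̄[X⃗/X⃗¹] (φ̄ replaces each propositional variable p of φ by the primitive event p = 1, and [X⃗/X⃗¹] replaces each occurrence of X ∈ X⃗ by X¹). Then ∃X⃗∀Y⃗φ is true if and only if A = 0 is a cause of ψ in (M, u) under the updated HP definition. -/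

import Mathlib

/-! ### Causal models (finitely presented) -/

/-- A finitely presented causal model over a signature `(U, V, R)`:
`rU` lists the range sizes of the exogenous variables `U` (a variable with
range size `r` takes values in `{0, …, r-1}`), `rV` those of the endogenous
variables `V`, and `tables` presents, for each endogenous variable, the
structural equation `F_X` as a finite table.  A table `t` applied to a total
assignment `a` (a list of values, exogenous variables first) yields the value
`evalTable t a = t.getD (Encodable.encode a + 1) (t.headD 0)`. -/
structure CM : Type where
  rU : List ℕ
  rV : List ℕ
  tables : List (List ℕ)

/-- The number of exogenous variables. -/
def CM.nU (M : CM) : ℕ := M.rU.length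

/-- The number of endogenous variables. -/
def CM.nV (M : CM) : ℕ := M.rV.length

/-- The value a table assigns to a total assignment. -/
def evalTable (t : List ℕ) (a : List ℕ) : ℕ :=
  t.getD (Encodable.encode a + 1) (t.headD 0)

/-- One simultaneous application of the structural equations to the endogenous
assignment `v`, under the intervention `I` (where `I i = some c` means that
endogenous variable `i` has been set to `c`), in context `u`. -/
def CM.step (M : CM) (I : ℕ → Option ℕ) (u v : List ℕ) : List ℕ :=
  (List.range M.nV).map fun i =>
    (I i).getD (evalTable (M.tables.getD i []) (u ++ v))

/-- The solution of the equations of `M` under intervention `I` in context `u`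
(unique for recursive models), as an assignment to the endogenous
variables. -/
def CM.solve (M : CM) (I : ℕ → Option ℕ) (u : List ℕ) : List ℕ :=
  (fun v => M.step I u v)^[M.nV + 1] (List.replicate M.nV 0)

/-- The actual value of endogenous variable `i` in `(M, u)`. -/
def CM.val (M : CM) (u : List ℕ) (i : ℕ) : ℕ :=
  (M.solve (fun _ => none) u).getD i 0

/-- Boolean combinations of primitive events `X = x`, where `X` is (the index
of) an endogenous variable. -/
inductive CForm : Type
  | eq : ℕ → ℕ → CForm
  | not : CForm → CForm
  | and : CForm → CForm → CForm
  | or : CForm → CForm → CForm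

/-- Satisfaction of a formula by an assignment `v` to the endogenous
variables. -/
def CForm.sat (v : List ℕ) : CForm → Prop
  | .eq i x => v.getD i 0 = x
  | .not φ => ¬ CForm.sat v φ
  | .and φ ψ => CForm.sat v φ ∧ CForm.sat v ψ
  | .or φ ψ => CForm.sat v φ ∨ CForm.sat v ψ

/-- `(M, u⃗) ⊨ [I]φ`: `φ` holds in the solution of the equations of `M` as
modified by the intervention `I`, in context `u`. -/
def CM.holds (M : CM) (u : List ℕ) (I : ℕ → Option ℕ) (φ : CForm) : Prop :=
  CForm.sat (M.solve I u) φ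

/-- The value assigned to variable `i` by the conjunction `X⃗ = x⃗`. -/
def xOf (Xs xs : List ℕ) (i : ℕ) : ℕ := xs.getD (Xs.idxOf i) 0

/-- The intervention `X⃗ ← x⃗, W' ← w, Z' ← z⃗*`, where `z⃗*` records the
actual values of the variables in `(M, u)`. -/
def intv (M : CM) (u : List ℕ) (Xs xs : List ℕ) (W' : Finset ℕ) (w : ℕ → ℕ)
    (Z' : Finset ℕ) : ℕ → Option ℕ := fun i =>
  if i ∈ Xs then some (xOf Xs xs i)
  else if i ∈ W' then some (w i)
  else if i ∈ Z' then some (M.val u i)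
  else none

/-- The set of endogenous variables of `M`. -/
def CM.endo (M : CM) : Finset ℕ := Finset.range M.nV

/-- AC1: `X⃗ = x⃗` and `φ` both hold in `(M, u⃗)`. -/
def AC1 (M : CM) (u : List ℕ) (φ : CForm) (Xs xs : List ℕ) : Prop :=
  (∀ k, k < Xs.length → M.val u (Xs.getD k 0) = xs.getD k 0) ∧
  M.holds u (fun _ => none) φ

/-- AC2 of the updated HP definition, with a specific witness `(W⃗, x⃗', w⃗)`.
Here `W` is a set of endogenous variables disjoint from `X⃗` (so that
`(Z⃗, W⃗)` with `Z⃗` the complement of `W⃗` is a partition of `V` with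
`X⃗ ⊆ Z⃗`), `x'` is a setting of `X⃗` and `w` a setting of `W⃗` (settings take
values in the ranges of the respective variables), such that:
(a) `(M, u⃗) ⊨ [X⃗ ← x⃗', W⃗ ← w⃗]¬φ`; and
(b) `(M, u⃗) ⊨ [X⃗ ← x⃗, W⃗' ← w⃗, Z⃗' ← z⃗*]φ` for all subsets `W⃗'` of `W⃗`
    and all subsets `Z⃗'` of `Z⃗ \ X⃗`, where `z⃗*` gives the actual values in
    `(M, u⃗)`. -/
def AC2With (M : CM) (u : List ℕ) (φ : CForm) (Xs xs : List ℕ)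
    (W : Finset ℕ) (x' : List ℕ) (w : ℕ → ℕ) : Prop :=
  W ⊆ M.endo ∧ (∀ i ∈ Xs, i ∉ W) ∧
  x'.length = Xs.length ∧
  (∀ k, k < Xs.length → x'.getD k 0 < M.rV.getD (Xs.getD k 0) 0) ∧
  (∀ i ∈ W, w i < M.rV.getD i 0) ∧
  ¬ M.holds u (intv M u Xs x' W w ∅) φ ∧
  (∀ W' ⊆ W, ∀ Z' ⊆ (M.endo \ W) \ Xs.toFinset,
    M.holds u (intv M u Xs xs W' w Z') φ)

/-- AC2 of the updated HP definition. -/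
def AC2 (M : CM) (u : List ℕ) (φ : CForm) (Xs xs : List ℕ) : Prop :=
  ∃ W x' w, AC2With M u φ Xs xs W x' w

/-- AC3: minimality — no strict sub-conjunction of `X⃗ = x⃗` satisfies AC2. -/
def AC3 (M : CM) (u : List ℕ) (φ : CForm) (Xs xs : List ℕ) : Prop :=
  ∀ Ys ys : List ℕ, Ys.length = ys.length →
    List.Sublist (Ys.zip ys) (Xs.zip xs) → Ys.zip ys ≠ Xs.zip xs → ¬ AC2 M u φ Ys ys

/-- `X⃗ = x⃗` is an actual cause of `φ` in `(M, u⃗)` (updated HP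
definition). -/
def IsCause (M : CM) (u : List ℕ) (φ : CForm) (Xs xs : List ℕ) : Prop :=
  AC1 M u φ Xs xs ∧ AC2 M u φ Xs xs ∧ AC3 M u φ Xs xs

/-- A total assignment (to all variables, exogenous first) respecting the
variable ranges. -/
def CM.ValidAssign (M : CM) (a : List ℕ) : Prop :=
  a.length = M.nU + M.nV ∧
  ∀ k, k < a.length → a.getD k 0 < (M.rU ++ M.rV).getD k 0

/-- Well-formedness of the presentation: one table per endogenous variable,
nonempty ranges, and all equations produce values in range. -/
def CM.WellFormed (M : CM) : Prop :=
  M.tables.length = M.nV ∧ (∀ r ∈ M.rU, 1 ≤ r) ∧ (∀ r ∈ M.rV, 1 ≤ r) ∧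
  ∀ i, i < M.nV → ∀ a, M.ValidAssign a →
    evalTable (M.tables.getD i []) a < M.rV.getD i 0

/-- The structural equation of endogenous variable `i` depends on position `k`
of the total assignment. -/
def CM.DependsOn (M : CM) (i k : ℕ) : Prop :=
  ∃ a b, M.ValidAssign a ∧ M.ValidAssign b ∧
    (∀ m, m ≠ k → a.getD m 0 = b.getD m 0) ∧
    evalTable (M.tables.getD i []) a ≠ evalTable (M.tables.getD i []) b

/-- `M` is recursive: the dependency graph of the causal network is acyclic,
i.e., the endogenous variables can be linearly ordered so that each equation
depends only on earlier variables (and the exogenous variables). -/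
def CM.Recursive (M : CM) : Prop :=
  ∃ ord : List ℕ, ord.Nodup ∧ (∀ j, j < M.nV → j ∈ ord) ∧
    ∀ i j, i < M.nV → j < M.nV → M.DependsOn i (M.nU + j) →
      ord.idxOf j < ord.idxOf i

/-- A binary causal model: every variable has exactly two possible values. -/
def CM.Binary (M : CM) : Prop := (∀ r ∈ M.rU, r = 2) ∧ (∀ r ∈ M.rV, r = 2)

/-- A context: a setting of the exogenous variables, within their ranges. -/
def CM.ValidContext (M : CM) (u : List ℕ) : Prop :=
  u.length = M.nU ∧ ∀ k, k < u.length → u.getD k 0 < M.rU.getD k 0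

/-! ### Explicit construction of tables -/

/-- All 0/1-valued lists of length `n`. -/
def binLists : ℕ → List (List ℕ)
  | 0 => [[]]
  | (n+1) => (binLists n).flatMap fun l => [0 :: l, 1 :: l]

/-- A finite table presenting the function `f` on all 0/1 assignments of
length `n`: `evalTable (mkTable n f) a = f a` for every `a ∈ binLists n`. -/
def mkTable (n : ℕ) (f : List ℕ → ℕ) : List ℕ :=
  let dom := binLists n
  let m := ((dom.map fun a => Encodable.encode a + 1).foldr max 0) + 1
  (List.range m).map fun idx =>
    match dom.find? (fun a => Encodable.encode a + 1 == idx) with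
    | some a => f a
    | none => 0

/-! ### Propositional formulas and quantified Boolean formulas -/

/-- Propositional formulas over variables indexed by `ℕ`. -/
inductive PropForm : Type
  | var : ℕ → PropForm
  | not : PropForm → PropForm
  | and : PropForm → PropForm → PropForm
  | or : PropForm → PropForm → PropForm

/-- Evaluation of a propositional formula under a truth assignment. -/
def PropForm.eval (τ : ℕ → Bool) : PropForm → Bool
  | .var v => τ v
  | .not p => !(PropForm.eval τ p)
  | .and p q => (PropForm.eval τ p) && (PropForm.eval τ q)
  | .or p q => (PropForm.eval τ p) || (PropForm.eval τ q)

/-- The variables occurring in a propositional formula. -/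
def PropForm.vars : PropForm → List ℕ
  | .var v => [v]
  | .not p => p.vars
  | .and p q => p.vars ++ q.vars
  | .or p q => p.vars ++ q.vars

/-- A valid causal formula (used as the unit of conjunctions). -/
def CForm.top : CForm := .or (.eq 0 0) (.not (.eq 0 0))

/-- The conjunction of a list of causal formulas. -/
def conjC (l : List CForm) : CForm := l.foldr CForm.and CForm.top

/-- The causal formula `X ≠ Y` for binary variables `i`, `j`, i.e.
`(X = 1 ∧ Y = 0) ∨ (X = 0 ∧ Y = 1)`. -/
def neqC (i j : ℕ) : CForm :=
  .or (.and (.eq i 1) (.eq j 0)) (.and (.eq i 0) (.eq j 1))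

/-! ### The reduction from `Σ₂(SAT)` to singleton causality in binary models

Given a CQBF `∃X⃗∀Y⃗φ` (with `X⃗`, `Y⃗` given by the lists `Xv`, `Yv` of
variable names), the constructed binary causal model has one exogenous
variable `U` and endogenous variables `X⁰` (indices `0, …, nX-1`), `X¹`
(indices `nX, …, 2nX-1`) for each `X ∈ X⃗`, `Y` (indices `2nX, …, 2nX+nY-1`)
for each `Y ∈ Y⃗`, and a fresh variable `A` (index `2nX+nY`), where every
endogenous variable `V` has structural equation `V = U`. -/

/-- The constructed model. -/
def redModel (Xv Yv : List ℕ) : CM :=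
  ⟨[2], List.replicate (2 * Xv.length + Yv.length + 1) 2,
    List.replicate (2 * Xv.length + Yv.length + 1)
      (mkTable (2 * Xv.length + Yv.length + 2) fun a => a.getD 0 0)⟩

/-- `φ̄[X⃗/X⃗¹]`: replace each propositional variable `p` by the primitive
event `p = 1`, and each `X ∈ X⃗` by `X¹`. -/
def trX1 (Xv Yv : List ℕ) : PropForm → CForm
  | .var v => if v ∈ Xv then .eq (Xv.length + Xv.idxOf v) 1
              else .eq (2 * Xv.length + Yv.idxOf v) 1
  | .not p => .not (trX1 Xv Yv p)
  | .and p q => .and (trX1 Xv Yv p) (trX1 Xv Yv q)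
  | .or p q => .or (trX1 Xv Yv p) (trX1 Xv Yv q)

/-- The formula `ψ = ψ₁ ∨ (ψ₂ ∧ ψ₃)`, where
`ψ₁ = ¬(⋀_{X ∈ X⃗} (X⁰ ≠ X¹))`, `ψ₂ = ¬(A = 1 ∧ Y⃗ = 1⃗)` and
`ψ₃ = (A = 1) ∨ φ̄[X⃗/X⃗¹]`. -/
def redForm (Xv Yv : List ℕ) (φ : PropForm) : CForm :=
  let nX := Xv.length
  let nY := Yv.length
  let ψ1 : CForm :=
    .not (conjC ((List.range nX).map fun j => neqC j (nX + j)))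
  let ψ2 : CForm :=
    .not (.and (.eq (2 * nX + nY) 1)
      (conjC ((List.range nY).map fun j => .eq (2 * nX + j) 1)))
  let ψ3 : CForm := .or (.eq (2 * nX + nY) 1) (trX1 Xv Yv φ)
  .or ψ1 (.and ψ2 ψ3)

/-! The model is degenerate: every equation is `V = U`, so in context `U = 0` the solution
under a binary intervention is the intervention itself, padded with zeros; the values `z⃗*`
are all `0` and the sets `Z⃗'` play no role. Hence AC2 for `A = 0` amounts to a set `W` and
a setting `w` such that `ψ` fails under `A ← 1, W ← w` but holds under `A ← 0, W' ← w` for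
every `W' ⊆ W`.

If `τ` witnesses `∃X⃗∀Y⃗φ`, take `W` = all variables but `A`, with `X¹ ← τ`, `X⁰ ← ¬τ`,
`Y⃗ ← 1⃗`. Whenever a sub-setting keeps every pair `X⁰, X¹` distinct, it must keep each
`X¹ = τ X`, and then `φ̄[X⃗/X⃗¹]` holds by the choice of `τ`. Conversely, failure of `ψ`
forces all pairs to differ, `A ← 1` (with `A ← 0` the intervention (a) is an instance of
(b)) and `Y⃗ ← 1⃗` inside `W`; reading `τ` off the `X¹`, every `ν` is realised by dropping
from `W` the `Y` with `ν Y = false`. -/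

theorem not_AC2_nil (M : CM) (u : List ℕ) (φ : CForm) : ¬ AC2 M u φ [] [] := by
  rintro ⟨W, x', w, -, -, -, -, -, hneg, hpos⟩
  have hx' : intv M u [] x' W w ∅ = intv M u [] [] W w ∅ := by
    funext i
    simp [intv]
  exact hneg (hx' ▸ hpos W subset_rfl ∅ (Finset.empty_subset _))

theorem AC3_singleton (M : CM) (u : List ℕ) (φ : CForm) (X x : ℕ) : AC3 M u φ [X] [x] := by
  intro Ys ys hlen hsub hne
  rcases List.sublist_singleton.1 hsub with hnil | hself
  · obtain ⟨rfl, rfl⟩ : Ys = [] ∧ ys = [] := by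
      have := congrArg List.length hnil
      simp only [List.length_zip, List.length_nil] at this
      exact ⟨List.eq_nil_of_length_eq_zero (by omega), List.eq_nil_of_length_eq_zero (by omega)⟩
    exact not_AC2_nil M u φ
  · exact absurd hself hne

theorem xOf_singleton (X : ℕ) (xs : List ℕ) : xOf [X] xs X = xs.getD 0 0 := by
  simp [xOf]

theorem mem_binLists {n : ℕ} {a : List ℕ} :
    a ∈ binLists n ↔ a.length = n ∧ ∀ x ∈ a, x < 2 := by
  induction n generalizing a with
  | zero => cases a <;> simp [binLists]
  | succ n ih =>
    cases a with
    | nil => simp [binLists]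
    | cons x t =>
      simp only [binLists, List.mem_flatMap, List.mem_cons,
        List.not_mem_nil, or_false, List.cons.injEq, List.length_cons, forall_eq_or_imp]
      constructor
      · rintro ⟨l, hl, ⟨rfl, rfl⟩ | ⟨rfl, rfl⟩⟩ <;> simp_all
      · rintro ⟨hlen, hx, ht⟩
        exact ⟨t, ih.2 ⟨by omega, ht⟩, by simp; omega⟩

theorem find?_encode_add_one {l : List (List ℕ)} {a : List ℕ} (h : a ∈ l) :
    l.find? (fun b => Encodable.encode b + 1 == Encodable.encode a + 1) = some a := by
  obtain ⟨b, hb⟩ :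
      ∃ b, l.find? (fun b => Encodable.encode b + 1 == Encodable.encode a + 1) = some b :=
    Option.isSome_iff_exists.1 (List.find?_isSome.2 ⟨a, h, by simp⟩)
  have hba : b = a := by simpa using List.find?_some hb
  rw [hb, hba]

theorem evalTable_mkTable {n : ℕ} (f : List ℕ → ℕ) {a : List ℕ} (h : a ∈ binLists n) :
    evalTable (mkTable n f) a = f a := by
  have hle := List.le_max_of_le' 0
    (List.mem_map_of_mem (f := fun b => Encodable.encode b + 1) h) le_rfl
  simp only [evalTable, mkTable, List.getD_eq_getElem?_getD, List.getElem?_map,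
    List.getElem?_range (Nat.lt_succ_of_le hle), Option.map_some, Option.getD_some,
    find?_encode_add_one h]

def CForm.SatBy (g : ℕ → ℕ) : CForm → Prop
  | .eq i x => g i = x
  | .not ψ => ¬ ψ.SatBy g
  | .and ψ χ => ψ.SatBy g ∧ χ.SatBy g
  | .or ψ χ => ψ.SatBy g ∨ χ.SatBy g

theorem CForm.sat_iff_satBy (v : List ℕ) (ψ : CForm) :
    CForm.sat v ψ ↔ ψ.SatBy (fun i => v.getD i 0) := by
  induction ψ <;> simp [CForm.sat, CForm.SatBy, *]

theorem CForm.satBy_conjC (g : ℕ → ℕ) (l : List CForm) :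
    (conjC l).SatBy g ↔ ∀ c ∈ l, c.SatBy g := by
  induction l with
  | nil => simpa [conjC, CForm.top, CForm.SatBy] using em _
  | cons c l ih => simp [conjC, CForm.SatBy, ← ih]

theorem CForm.satBy_neqC (g : ℕ → ℕ) (i j : ℕ) : (neqC i j).SatBy g ↔ g i + g j = 1 := by
  simp only [neqC, CForm.SatBy]
  omega

def trX1Index (Xv Yv : List ℕ) (v : ℕ) : ℕ :=
  if v ∈ Xv then Xv.length + Xv.idxOf v else 2 * Xv.length + Yv.idxOf v

theorem satBy_trX1 (Xv Yv : List ℕ) (g : ℕ → ℕ) (φ : PropForm) :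
    (trX1 Xv Yv φ).SatBy g ↔ φ.eval (fun v => decide (g (trX1Index Xv Yv v) = 1)) = true := by
  induction φ with
  | var v => by_cases h : v ∈ Xv <;> simp [trX1, CForm.SatBy, PropForm.eval, trX1Index, h]
  | not p ih => simp [trX1, CForm.SatBy, PropForm.eval, ih]
  | and p q ihp ihq => simp [trX1, CForm.SatBy, PropForm.eval, ihp, ihq]
  | or p q ihp ihq => simp [trX1, CForm.SatBy, PropForm.eval, ihp, ihq]

theorem PropForm.eval_congr {τ τ' : ℕ → Bool} {φ : PropForm}
    (h : ∀ v ∈ φ.vars, τ v = τ' v) : φ.eval τ = φ.eval τ' := by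
  induction φ with
  | var v => exact h v (by simp [PropForm.vars])
  | not p ih => simp only [PropForm.eval, ih h]
  | and p q ihp ihq | or p q ihp ihq =>
    simp only [PropForm.vars, List.mem_append] at h
    simp only [PropForm.eval, ihp fun v hv => h v (.inl hv), ihq fun v hv => h v (.inr hv)]

theorem satBy_redForm (Xv Yv : List ℕ) (φ : PropForm) (g : ℕ → ℕ) :
    (redForm Xv Yv φ).SatBy g ↔
      (¬ ∀ j < Xv.length, g j + g (Xv.length + j) = 1) ∨
        (¬ (g (2 * Xv.length + Yv.length) = 1 ∧
            ∀ j < Yv.length, g (2 * Xv.length + j) = 1)) ∧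
          (g (2 * Xv.length + Yv.length) = 1 ∨
            φ.eval (fun v => decide (g (trX1Index Xv Yv v) = 1)) = true) := by
  simp [redForm, CForm.SatBy, CForm.satBy_conjC, CForm.satBy_neqC, satBy_trX1]

section Model

variable {Xv Yv : List ℕ}

theorem redModel_nV : (redModel Xv Yv).nV = 2 * Xv.length + Yv.length + 1 := by
  simp [redModel, CM.nV]

theorem redModel_rV_getD {i : ℕ} (hi : i < (redModel Xv Yv).nV) :
    (redModel Xv Yv).rV.getD i 0 = 2 := by
  rw [redModel_nV] at hi
  simp [redModel, hi]

theorem redModel_step (I : ℕ → Option ℕ) {v : List ℕ}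
    (hlen : v.length = (redModel Xv Yv).nV) (hv : ∀ x ∈ v, x < 2) :
    (redModel Xv Yv).step I [0] v = (List.range (redModel Xv Yv).nV).map fun i => (I i).getD 0 := by
  have hmem : [0] ++ v ∈ binLists (2 * Xv.length + Yv.length + 2) := by
    rw [mem_binLists, List.length_append, hlen, redModel_nV]
    exact ⟨by simp; omega, by simpa using hv⟩
  refine List.map_congr_left fun i hi => ?_
  rw [List.mem_range, redModel_nV] at hi
  have htable : (redModel Xv Yv).tables.getD i [] =
      mkTable (2 * Xv.length + Yv.length + 2) fun a => a.getD 0 0 := by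
    simp [redModel, hi]
  rw [htable, evalTable_mkTable _ hmem]
  rfl

/-- The equations `V = U` with `U = 0` make the padded intervention a fixed point of `step`,
reached after one step from the all-zero start. -/
theorem redModel_solve {I : ℕ → Option ℕ} (hI : ∀ i, ∀ c ∈ I i, c < 2) :
    (redModel Xv Yv).solve I [0] = (List.range (redModel Xv Yv).nV).map fun i => (I i).getD 0 := by
  have hbin : ∀ x ∈ (List.range (redModel Xv Yv).nV).map fun i => (I i).getD 0, x < 2 := by
    simp only [List.mem_map]
    rintro _ ⟨i, -, rfl⟩
    cases h : I i with
    | none => simp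
    | some c => exact hI i c h
  rw [CM.solve, Function.iterate_succ_apply,
    redModel_step I (by simp) (fun x hx => by simp [List.eq_of_mem_replicate hx])]
  exact Function.iterate_fixed (redModel_step I (by simp) hbin) _

theorem redModel_holds_iff {I : ℕ → Option ℕ} (hI : ∀ i, ∀ c ∈ I i, c < 2)
    (ψ : CForm) :
    (redModel Xv Yv).holds [0] I ψ ↔
      ψ.SatBy (fun i => if i < 2 * Xv.length + Yv.length + 1 then (I i).getD 0 else 0) := by
  rw [CM.holds, redModel_solve hI, CForm.sat_iff_satBy, redModel_nV]
  refine iff_of_eq (congrArg (ψ.SatBy ·) (funext fun i => ?_))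
  split_ifs with hi <;> simp [hi]

theorem redModel_val (i : ℕ) : (redModel Xv Yv).val [0] i = 0 := by
  rw [CM.val, redModel_solve (by simp)]
  by_cases hi : i < (redModel Xv Yv).nV <;> simp [hi]

theorem redModel_holds_intv {xs : List ℕ} {W' : Finset ℕ} {w : ℕ → ℕ} (Z' : Finset ℕ)
    (hW' : W' ⊆ (redModel Xv Yv).endo) (hx : xs.getD 0 0 < 2) (hw : ∀ i ∈ W', w i < 2)
    (ψ : CForm) :
    (redModel Xv Yv).holds [0]
        (intv (redModel Xv Yv) [0] [2 * Xv.length + Yv.length] xs W' w Z') ψ ↔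
      ψ.SatBy (Function.update (W'.piecewise w 0) (2 * Xv.length + Yv.length) (xs.getD 0 0)) := by
  have hbin : ∀ i, ∀ c ∈ intv (redModel Xv Yv) [0] [2 * Xv.length + Yv.length] xs W' w Z' i,
      c < 2 := by
    intro i c hc
    simp only [intv, List.mem_singleton] at hc
    split_ifs at hc with hA hW hZ <;> simp only [Option.mem_def, Option.some.injEq,
      reduceCtorEq] at hc <;> subst hc
    · rwa [hA, xOf_singleton]
    · exact hw i hW
    · rw [redModel_val]; omega
  rw [redModel_holds_iff hbin]
  refine iff_of_eq (congrArg (ψ.SatBy ·) (funext fun i => ?_))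
  by_cases hi : i < 2 * Xv.length + Yv.length + 1
  · by_cases hA : i = 2 * Xv.length + Yv.length
    · subst hA
      simp [intv, xOf_singleton]
    · by_cases hW : i ∈ W'
      · simp [hi, hA, hW, intv]
      · simp only [hi, hA, hW, intv, redModel_val, List.mem_singleton, if_true, if_false,
          Finset.piecewise_eq_of_notMem, ne_eq, not_false_eq_true, Function.update_of_ne]
        split_ifs <;> rfl
  · have hW : i ∉ W' := fun h =>
      hi (redModel_nV (Xv := Xv) (Yv := Yv) ▸ Finset.mem_range.1 (hW' h))
    simp [hi, hW, show i ≠ 2 * Xv.length + Yv.length by omega]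

end Model

theorem piecewise_eq_of_add_eq_one {α : Type*} [DecidableEq α] {W : Finset α} {w : α → ℕ}
    {i k : α} (hw : w i + w k = 1) (h : W.piecewise w 0 i + W.piecewise w 0 k = 1) :
    W.piecewise w 0 k = w k := by
  by_cases hk : k ∈ W
  · simp [hk]
  · by_cases hi : i ∈ W <;> simp_all

theorem List.getD_idxOf {α : Type*} [BEq α] [LawfulBEq α] {l : List α} {a : α} (h : a ∈ l)
    (d : α) : l.getD (l.idxOf a) d = a := by
  rw [List.getD_eq_getElem?_getD, List.getElem?_eq_getElem (List.idxOf_lt_length_iff.2 h),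
    Option.getD_some, List.getElem_idxOf]

section Forward

variable {Xv Yv : List ℕ}

def cfSetting (Xv : List ℕ) (τ : ℕ → Bool) (i : ℕ) : ℕ :=
  if i < Xv.length then (!τ (Xv.getD i 0)).toNat
  else if i < 2 * Xv.length then (τ (Xv.getD (i - Xv.length) 0)).toNat
  else 1

theorem cfSetting_lt_two (τ : ℕ → Bool) (i : ℕ) : cfSetting Xv τ i < 2 := by
  unfold cfSetting
  split_ifs <;> simp only [Bool.toNat_lt, Nat.one_lt_two]

theorem cfSetting_length_add {τ : ℕ → Bool} {j : ℕ} (hj : j < Xv.length) :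
    cfSetting Xv τ (Xv.length + j) = (τ (Xv.getD j 0)).toNat := by
  rw [cfSetting, if_neg (by omega), if_pos (by omega), Nat.add_sub_cancel_left]

theorem cfSetting_add_length {τ : ℕ → Bool} {j : ℕ} (hj : j < Xv.length) :
    cfSetting Xv τ j + cfSetting Xv τ (Xv.length + j) = 1 := by
  rw [cfSetting_length_add hj, cfSetting, if_pos hj]
  cases τ (Xv.getD j 0) <;> rfl

theorem satBy_redForm_of_forall {φ : PropForm} {τ : ℕ → Bool}
    (hτ : ∀ ν : ℕ → Bool, φ.eval (fun v => if v ∈ Xv then τ v else ν v) = true)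
    (W' : Finset ℕ) :
    (redForm Xv Yv φ).SatBy
      (Function.update (W'.piecewise (cfSetting Xv τ) 0) (2 * Xv.length + Yv.length) 0) := by
  set g := Function.update (W'.piecewise (cfSetting Xv τ) 0) (2 * Xv.length + Yv.length) 0
  have hgX : ∀ i < 2 * Xv.length, g i = W'.piecewise (cfSetting Xv τ) 0 i := fun i hi =>
    Function.update_of_ne (by omega) _ _
  rw [satBy_redForm]
  by_cases hpairs : ∀ j < Xv.length, g j + g (Xv.length + j) = 1
  · have hA : g (2 * Xv.length + Yv.length) = 0 := Function.update_self ..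
    refine Or.inr ⟨fun h => by omega, Or.inr ?_⟩
    rw [← hτ fun v => decide (g (2 * Xv.length + Yv.idxOf v) = 1)]
    refine PropForm.eval_congr fun v _ => ?_
    by_cases hv : v ∈ Xv
    · have hj := List.idxOf_lt_length_iff.2 hv
      have hX1 : g (Xv.length + Xv.idxOf v) = (τ v).toNat := by
        have hpair := hpairs _ hj
        rw [hgX _ (by omega), hgX _ (by omega)] at hpair
        rw [hgX _ (by omega), piecewise_eq_of_add_eq_one (cfSetting_add_length hj) hpair,
          cfSetting_length_add hj, List.getD_idxOf hv]
      simp [trX1Index, hv, hX1]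
    · simp [trX1Index, hv]
  · exact Or.inl hpairs

theorem not_satBy_redForm_cfSetting (φ : PropForm) (τ : ℕ → Bool) :
    ¬ (redForm Xv Yv φ).SatBy (Function.update
      ((Finset.range (2 * Xv.length + Yv.length)).piecewise (cfSetting Xv τ) 0)
      (2 * Xv.length + Yv.length) 1) := by
  set g := Function.update ((Finset.range (2 * Xv.length + Yv.length)).piecewise
    (cfSetting Xv τ) 0) (2 * Xv.length + Yv.length) 1
  have hg : ∀ i < 2 * Xv.length + Yv.length, g i = cfSetting Xv τ i := fun i hi => by
    simp [g, Function.update_of_ne (Nat.ne_of_lt hi), hi]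
  rw [satBy_redForm]
  rintro (h | ⟨h, -⟩)
  · exact h fun j hj => by rw [hg _ (by omega), hg _ (by omega), cfSetting_add_length hj]
  · refine h ⟨Function.update_self .., fun j hj => ?_⟩
    rw [hg _ (by omega), cfSetting, if_neg (by omega), if_neg (by omega)]

theorem isCause_redForm_of_exists_forall {φ : PropForm}
    (h : ∃ τ : ℕ → Bool, ∀ ν : ℕ → Bool,
      φ.eval (fun v => if v ∈ Xv then τ v else ν v) = true) :
    IsCause (redModel Xv Yv) [0] (redForm Xv Yv φ) [2 * Xv.length + Yv.length] [0] := by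
  obtain ⟨τ, hτ⟩ := h
  have hW : Finset.range (2 * Xv.length + Yv.length) ⊆ (redModel Xv Yv).endo := by
    simp [CM.endo, redModel_nV]
  have hw : ∀ i ∈ Finset.range (2 * Xv.length + Yv.length), cfSetting Xv τ i < 2 :=
    fun i _ => cfSetting_lt_two τ i
  have hpos : ∀ W' ⊆ Finset.range (2 * Xv.length + Yv.length), ∀ Z' : Finset ℕ,
      (redModel Xv Yv).holds [0]
        (intv (redModel Xv Yv) [0] [2 * Xv.length + Yv.length] [0] W' (cfSetting Xv τ) Z')
        (redForm Xv Yv φ) := fun W' hW' Z' =>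
    (redModel_holds_intv Z' (hW'.trans hW) (by simp) (fun i hi => hw i (hW' hi)) _).2
      (satBy_redForm_of_forall hτ W')
  refine ⟨⟨?_, ?_⟩, ⟨_, [1], cfSetting Xv τ, hW, by simp, rfl, ?_, ?_, ?_,
    fun W' hW' Z' _ => hpos W' hW' Z'⟩, AC3_singleton _ _ _ _ _⟩
  · intro k hk
    obtain rfl : k = 0 := by simpa using hk
    simp [redModel_val]
  · -- the actual world is the case `W' = ∅` of AC2(b): both are the all-zero assignment
    have h0 := hpos ∅ (Finset.empty_subset _) ∅
    rw [redModel_holds_intv ∅ (Finset.empty_subset _) (by simp) (by simp)] at h0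
    rw [redModel_holds_iff (by simp)]
    convert h0 using 2 with i
    simp [Function.update_apply]
  · intro k hk
    obtain rfl : k = 0 := by simpa using hk
    show 1 < (redModel Xv Yv).rV.getD (2 * Xv.length + Yv.length) 0
    rw [redModel_rV_getD (by simp [redModel_nV])]
    exact Nat.one_lt_two
  · exact fun i hi => (redModel_rV_getD (Finset.mem_range.1 (hW hi))).symm ▸ hw i hi
  · rw [redModel_holds_intv ∅ hW (by simp) hw]
    exact not_satBy_redForm_cfSetting φ τ

end Forward

section Converse

variable {Xv Yv : List ℕ}

theorem forall_of_not_satBy_redForm {φ : PropForm} {W : Finset ℕ} {w : ℕ → ℕ}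
    (h : ¬ (redForm Xv Yv φ).SatBy
      (Function.update (W.piecewise w 0) (2 * Xv.length + Yv.length) 1)) :
    (∀ j < Xv.length, W.piecewise w 0 j + W.piecewise w 0 (Xv.length + j) = 1) ∧
      ∀ j < Yv.length, 2 * Xv.length + j ∈ W ∧ w (2 * Xv.length + j) = 1 := by
  set s := Function.update (W.piecewise w 0) (2 * Xv.length + Yv.length) 1
  have hs : ∀ i < 2 * Xv.length + Yv.length, s i = W.piecewise w 0 i := fun i hi =>
    Function.update_of_ne (by omega) _ _
  rw [satBy_redForm] at h
  refine ⟨fun j hj => ?_, fun j hj => ?_⟩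
  · rw [← hs _ (by omega), ← hs _ (by omega)]
    exact not_not.1 (fun hp => h (.inl hp)) j hj
  · by_contra hY
    refine h (.inr ⟨fun hA => hY ?_, .inl (Function.update_self ..)⟩)
    have hsY := hA.2 j hj
    rw [hs _ (by omega)] at hsY
    by_cases hmem : 2 * Xv.length + j ∈ W <;> simp_all

theorem exists_forall_of_not_satBy_redForm {φ : PropForm}
    (hvars : ∀ v ∈ φ.vars, v ∈ Xv ∨ v ∈ Yv) {W : Finset ℕ} {w : ℕ → ℕ} {a : ℕ} (ha : a < 2)
    (hneg : ¬ (redForm Xv Yv φ).SatBy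
      (Function.update (W.piecewise w 0) (2 * Xv.length + Yv.length) a))
    (hpos : ∀ W' ⊆ W, (redForm Xv Yv φ).SatBy
      (Function.update (W'.piecewise w 0) (2 * Xv.length + Yv.length) 0)) :
    ∃ τ : ℕ → Bool, ∀ ν : ℕ → Bool,
      φ.eval (fun v => if v ∈ Xv then τ v else ν v) = true := by
  obtain rfl : a = 1 := by
    by_contra h
    obtain rfl : a = 0 := by omega
    exact hneg (hpos W subset_rfl)
  obtain ⟨hpairs, hY⟩ := forall_of_not_satBy_redForm hneg
  refine ⟨fun v => decide (W.piecewise w 0 (Xv.length + Xv.idxOf v) = 1), fun ν => ?_⟩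
  set W' := W.filter fun i => i < 2 * Xv.length ∨ ν (Yv.getD (i - 2 * Xv.length) 0)
  set g := Function.update (W'.piecewise w 0) (2 * Xv.length + Yv.length) 0
  have hgX : ∀ i < 2 * Xv.length, g i = W.piecewise w 0 i := fun i hi => by
    simp [g, W', Function.update_of_ne (show i ≠ 2 * Xv.length + Yv.length by omega),
      Finset.piecewise, hi]
  have hgY : ∀ j < Yv.length, g (2 * Xv.length + j) = (ν (Yv.getD j 0)).toNat := fun j hj => by
    cases hν : ν (Yv.getD j 0) <;> simp only [List.getD_eq_getElem?_getD] at hν <;>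
      simp [g, W', Finset.piecewise, hν, hY j hj, hj.ne]
  rcases (satBy_redForm Xv Yv φ g).1 (hpos W' (Finset.filter_subset _ _))
    with hp | ⟨-, hA | hφ⟩
  · exact absurd (fun j hj => by rw [hgX _ (by omega), hgX _ (by omega)]; exact hpairs j hj) hp
  · simp [g] at hA
  · rw [← hφ]
    refine PropForm.eval_congr fun v hv => ?_
    by_cases hvX : v ∈ Xv
    · have hj := List.idxOf_lt_length_iff.2 hvX
      simp [trX1Index, hvX, hgX _ (show Xv.length + Xv.idxOf v < 2 * Xv.length by omega)]
    · have hvY := (hvars v hv).resolve_left hvX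
      simp only [trX1Index, hvX, if_false]
      rw [hgY _ (List.idxOf_lt_length_iff.2 hvY), List.getD_idxOf hvY]
      simp

theorem exists_forall_of_AC2 {φ : PropForm} (hvars : ∀ v ∈ φ.vars, v ∈ Xv ∨ v ∈ Yv)
    (h : AC2 (redModel Xv Yv) [0] (redForm Xv Yv φ) [2 * Xv.length + Yv.length] [0]) :
    ∃ τ : ℕ → Bool, ∀ ν : ℕ → Bool,
      φ.eval (fun v => if v ∈ Xv then τ v else ν v) = true := by
  obtain ⟨W, x', w, hW, -, -, hx', hw, hneg, hpos⟩ := h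
  have hw2 : ∀ i ∈ W, w i < 2 := fun i hi =>
    redModel_rV_getD (Finset.mem_range.1 (hW hi)) ▸ hw i hi
  have hx2 : x'.getD 0 0 < 2 := by
    have := hx' 0 (by simp)
    rwa [redModel_rV_getD (by simp [redModel_nV])] at this
  refine exists_forall_of_not_satBy_redForm (W := W) (w := w) hvars hx2 ?_ fun W' hW' => ?_
  · rwa [← redModel_holds_intv ∅ hW hx2 hw2]
  · exact (redModel_holds_intv (xs := [0]) ∅ (hW'.trans hW) (by simp)
      (fun i hi => hw2 i (hW' hi)) _).1
      (hpos W' hW' ∅ (Finset.empty_subset _))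

end Converse

theorem sigma2SAT_reduction_general (φ : PropForm) (Xv Yv : List ℕ)
    (hvars : ∀ v ∈ φ.vars, v ∈ Xv ∨ v ∈ Yv) :
    (∃ τ : ℕ → Bool, ∀ ν : ℕ → Bool,
        φ.eval (fun v => if v ∈ Xv then τ v else ν v) = true) ↔
      IsCause (redModel Xv Yv) [0] (redForm Xv Yv φ)
        [2 * Xv.length + Yv.length] [0] :=
  ⟨isCause_redForm_of_exists_forall, fun h => exists_forall_of_AC2 hvars h.2.1⟩

/-- **Correctness of the reduction (Theorem 1, hardness part).**  The CQBF
`∃X⃗∀Y⃗φ` is true iff `A = 0` is a cause of `ψ` in `(M, u)`, where `M` is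
the constructed binary model, `u = 0` is the context assigning `0` to `U`,
and `ψ` is the constructed formula. -/
theorem sigma2SAT_reduction (φ : PropForm) (Xv Yv : List ℕ)
    (hX : Xv.Nodup) (hY : Yv.Nodup) (hdisj : ∀ v ∈ Xv, v ∉ Yv)
    (hvars : ∀ v ∈ φ.vars, v ∈ Xv ∨ v ∈ Yv) :
    (∃ τ : ℕ → Bool, ∀ ν : ℕ → Bool,
        φ.eval (fun v => if v ∈ Xv then τ v else ν v) = true) ↔
      IsCause (redModel Xv Yv) [0] (redForm Xv Yv φ)
        [2 * Xv.length + Yv.length] [0] :=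
  sigma2SAT_reduction_general φ Xv Yv hvars
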